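/- Let f₀, g₀, f₁, g₁ be nonzero homogeneous polynomials of degree 1 in ℂ[s,t] such that neither f₀ nor g₀ is a scalar multiple of f₁ or of g₁. Then for every nonzero homogeneous polynomial ℓ of degree 1 in ℂ[s,t], the cube ℓ³ does not divide f₀³g₀³ − f₁³g₁³. (This is the paper's argument, via the factorization f₀³g₀³−f₁³g₁³ = (f₀g₀−f₁g₁)(f₀g₀−ϱf₁g₁)(f₀g₀−ϱ²f₁g₁) with ϱ a primitive third root of unity, that no degree-6 base change ℙ¹ → ℙ¹ can have ramification index (3,3) over two points and (3,1,1,1) over a third point.) -/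

import Mathlib

/-!
Put `a = f₀ g₀` and `b = f₁ g₁`. The hypotheses make `a` and `b` coprime, so
the factors `a - ωⁱ b` of `a³ - b³ = ∏ᵢ (a - ωⁱ b)` (`ω` a primitive cube root of unity) are
pairwise coprime: a common divisor divides their difference, a nonzero multiple of `b`, hence
also `a`. The linear form `ℓ` is prime, so `ℓ³ ∣ a³ - b³` forces `ℓ³` to divide a single factor
`a - ωⁱ b`, which is nonzero and homogeneous of degree `2 < 3`.
-/

open MvPolynomial Finset

theorem IsPrimitiveRoot.pow_sub_pow_eq_prod_range_sub_pow_mul {A : Type*} [CommRing A]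
    [IsDomain A] {ζ : A} {n : ℕ} (hζ : IsPrimitiveRoot ζ n) (hn : 0 < n) (x y : A) :
    x ^ n - y ^ n = ∏ i ∈ range n, (x - ζ ^ i * y) := by
  classical
  rw [hζ.pow_sub_pow_eq_prod_sub_mul x y hn, Polynomial.nthRootsFinset_def,
    hζ.nthRoots_eq (one_pow n), Multiset.toFinset_map, Multiset.toFinset_range]
  simp only [mul_one]
  exact prod_image hζ.injOn_pow

theorem IsPrimitiveRoot.pow_sub_pow_eq_prod_range_sub_pow_smul {K A : Type*} [Field K]
    [CommRing A] [IsDomain A] [Algebra K A] {ω : K} {n : ℕ} (hω : IsPrimitiveRoot ω n)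
    (hn : 0 < n) (x y : A) :
    x ^ n - y ^ n = ∏ i ∈ range n, (x - ω ^ i • y) := by
  simp only [Algebra.smul_def, map_pow]
  exact (hω.map_of_injective (algebraMap K A).injective).pow_sub_pow_eq_prod_range_sub_pow_mul
    hn x y

theorem Prime.exists_mem_pow_dvd_of_pow_dvd_prod {ι M : Type*} [CommMonoidWithZero M]
    [IsCancelMulZero M] {p : M} (hp : Prime p) {s : Finset ι} {f : ι → M} {k : ℕ} (hk : k ≠ 0)
    (hs : ∀ i ∈ s, ∀ j ∈ s, p ∣ f i → p ∣ f j → i = j) (h : p ^ k ∣ ∏ i ∈ s, f i) :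
    ∃ i ∈ s, p ^ k ∣ f i := by
  classical
  obtain ⟨i, hi, hpi⟩ := hp.exists_mem_finset_dvd ((dvd_pow_self p hk).trans h)
  refine ⟨i, hi, hp.pow_dvd_of_dvd_mul_right k ?_ (by rwa [mul_prod_erase s f hi])⟩
  intro hrest
  obtain ⟨j, hj, hpj⟩ := hp.exists_mem_finset_dvd hrest
  exact ne_of_mem_erase hj (hs j (mem_of_mem_erase hj) i hi hpj hpi)

section Algebra

variable {K A : Type*} [Field K] [CommRing A] [Algebra K A]

theorem IsRelPrime.isUnit_of_dvd_sub_smul_of_dvd_sub_smul {a b d : A} (hab : IsRelPrime a b)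
    {c₁ c₂ : K} (hc : c₁ ≠ c₂) (h₁ : d ∣ a - c₁ • b) (h₂ : d ∣ a - c₂ • b) : IsUnit d := by
  have hb : d ∣ b := by
    have h := dvd_smul_of_dvd (c₂ - c₁)⁻¹ (h₁.sub h₂)
    rwa [sub_sub_sub_cancel_left, ← sub_smul, smul_smul,
      inv_mul_cancel₀ (sub_ne_zero.mpr hc.symm), one_smul] at h
  exact hab (by simpa using h₁.add (dvd_smul_of_dvd c₁ hb)) hb

theorem IsRelPrime.sub_smul_ne_zero {a b : A} (hab : IsRelPrime a b) (hb : ¬IsUnit b) (c : K) :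
    a - c • b ≠ 0 := by
  intro h
  rw [sub_eq_zero] at h
  exact hb (hab (h ▸ Dvd.intro_left _ (Algebra.smul_def c b).symm) dvd_rfl)

theorem Prime.exists_pow_dvd_sub_smul_of_pow_dvd_pow_sub_pow [IsDomain A] {ℓ a b : A}
    (hℓ : Prime ℓ) (hab : IsRelPrime a b) {ω : K} {n k : ℕ} (hω : IsPrimitiveRoot ω n)
    (hn : 0 < n) (hk : k ≠ 0) (h : ℓ ^ k ∣ a ^ n - b ^ n) :
    ∃ i < n, ℓ ^ k ∣ a - ω ^ i • b := by
  rw [hω.pow_sub_pow_eq_prod_range_sub_pow_smul hn] at h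
  have hfactors : ∀ i ∈ range n, ∀ j ∈ range n,
      ℓ ∣ a - ω ^ i • b → ℓ ∣ a - ω ^ j • b → i = j :=
    fun i hi j hj hdi hdj => hω.injOn_pow hi hj <| by
      by_contra hne
      exact hℓ.not_isUnit (hab.isUnit_of_dvd_sub_smul_of_dvd_sub_smul hne hdi hdj)
  obtain ⟨i, hi, hdvd⟩ := hℓ.exists_mem_pow_dvd_of_pow_dvd_prod hk hfactors h
  exact ⟨i, mem_range.mp hi, hdvd⟩

end Algebra

namespace MvPolynomial

variable {σ K : Type*} [Field K]

theorem prime_of_totalDegree_eq_one {p : MvPolynomial σ K} (hp : p.totalDegree = 1) :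
    Prime p := by
  refine UniqueFactorizationMonoid.irreducible_iff_prime.mp
    (irreducible_of_totalDegree_eq_one hp fun x hx => isUnit_iff_ne_zero.mpr fun hx0 => ?_)
  have : p = 0 := by ext i; simpa [hx0] using hx i
  simp [this] at hp

theorem isRelPrime_of_forall_ne_smul {p q : MvPolynomial σ K} (hp : p.totalDegree = 1)
    (hq : q.totalDegree = 1) (h : ∀ c : K, c ≠ 0 → q ≠ c • p) : IsRelPrime p q := by
  refine (prime_of_totalDegree_eq_one hp).irreducible.isRelPrime_iff_not_dvd.mpr ?_
  rintro ⟨r, rfl⟩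
  have hp0 : p ≠ 0 := by rintro rfl; simp at hp
  have hr0 : r ≠ 0 := by rintro rfl; simp at hq
  rw [totalDegree_mul_of_isDomain hp0 hr0, hp, add_eq_left] at hq
  obtain ⟨c, rfl⟩ : ∃ c, r = C c := ⟨_, totalDegree_eq_zero_iff_eq_C.mp hq⟩
  exact h c (by rintro rfl; simp at hr0) (by rw [smul_eq_C_mul, mul_comm])

end MvPolynomial

theorem stmt_18 (f₀ g₀ f₁ g₁ : MvPolynomial (Fin 2) ℂ)
    (hf₀ : f₀ ≠ 0) (hg₀ : g₀ ≠ 0) (hf₁ : f₁ ≠ 0) (hg₁ : g₁ ≠ 0)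
    (hf₀h : f₀.IsHomogeneous 1) (hg₀h : g₀.IsHomogeneous 1)
    (hf₁h : f₁.IsHomogeneous 1) (hg₁h : g₁.IsHomogeneous 1)
    (h₀₁ : ∀ c : ℂ, c ≠ 0 → f₀ ≠ c • f₁) (h₀₂ : ∀ c : ℂ, c ≠ 0 → f₀ ≠ c • g₁)
    (h₀₃ : ∀ c : ℂ, c ≠ 0 → g₀ ≠ c • f₁) (h₀₄ : ∀ c : ℂ, c ≠ 0 → g₀ ≠ c • g₁) :
    ∀ ℓ : MvPolynomial (Fin 2) ℂ, ℓ ≠ 0 → ℓ.IsHomogeneous 1 →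
      ¬ (ℓ ^ 3 ∣ f₀ ^ 3 * g₀ ^ 3 - f₁ ^ 3 * g₁ ^ 3) := by
  intro ℓ hℓ hℓh hdvd
  obtain ⟨ω, hω⟩ : ∃ ω : ℂ, IsPrimitiveRoot ω 3 :=
    ⟨_, Complex.isPrimitiveRoot_exp 3 (by norm_num)⟩
  have hcop : IsRelPrime (f₀ * g₀) (f₁ * g₁) :=
    .mul_left
      (.mul_right
        (isRelPrime_of_forall_ne_smul (hf₁h.totalDegree hf₁) (hf₀h.totalDegree hf₀) h₀₁).symm
        (isRelPrime_of_forall_ne_smul (hg₁h.totalDegree hg₁) (hf₀h.totalDegree hf₀) h₀₂).symm)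
      (.mul_right
        (isRelPrime_of_forall_ne_smul (hf₁h.totalDegree hf₁) (hg₀h.totalDegree hg₀) h₀₃).symm
        (isRelPrime_of_forall_ne_smul (hg₁h.totalDegree hg₁) (hg₀h.totalDegree hg₀) h₀₄).symm)
  have hb : ¬IsUnit (f₁ * g₁) := fun hu =>
    (prime_of_totalDegree_eq_one (hf₁h.totalDegree hf₁)).not_isUnit (isUnit_of_mul_isUnit_left hu)
  rw [← mul_pow, ← mul_pow] at hdvd
  obtain ⟨i, -, hi⟩ := (prime_of_totalDegree_eq_one (hℓh.totalDegree hℓ)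
    ).exists_pow_dvd_sub_smul_of_pow_dvd_pow_sub_pow hcop hω (by norm_num) (by norm_num) hdvd
  have hF : (f₀ * g₀ - ω ^ i • (f₁ * g₁)).IsHomogeneous 2 :=
    (hf₀h.mul hg₀h).sub (smul_eq_C_mul (f₁ * g₁) (ω ^ i) ▸ (hf₁h.mul hg₁h).C_mul _)
  have hle := totalDegree_le_of_dvd_of_isDomain hi (hcop.sub_smul_ne_zero hb _)
  rw [(hℓh.pow 3).totalDegree (pow_ne_zero 3 hℓ)] at hle
  have hdegF := hF.totalDegree_le
  omega
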